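/- arXiv:math/0304132 — 4 statements merged into one kernel-verified Lean document; each statement's English description precedes it below -/
import Mathlib

section
/- For every tree T on a finite set I and every nonempty subset J ⊆ I, the set S(J) of internal vertices of T of the form v_{(i,j)} with i, j distinct elements of J has cardinality |J| − 1. -/
open Finset

/-- A rooted binary tree with leaves labeled in `α`. -/
inductive BTree (α : Type) : Type where
  | leaf : α → BTree α
  | node : BTree α → BTree α → BTree α

namespace BTree

variable {α : Type} [DecidableEq α]

/-- The list of leaf labels of the tree. -/
def leafList : BTree α → List α
  | .leaf a => [a]
  | .node l r => l.leafList ++ r.leafList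

/-- The set of leaf labels of the tree. -/
def leaves (t : BTree α) : Finset α := t.leafList.toFinset

/-- `t` is a tree on the finite set `I`: its leaves are labeled bijectively by `I`. -/
def IsTreeOn (t : BTree α) (I : Finset α) : Prop :=
  t.leafList.Nodup ∧ t.leaves = I

/-- The set `V(t)` of internal vertices of the tree, each internal vertex being
represented by the set of its ancestor leaves (the leaf labels of the subtree
rooted there).  In this representation a vertex `v` is below a vertex `w` in the
ancestor order (i.e. `w` lies on the path from `v` to the root) exactly when
`v ⊆ w`. -/
def vertexSet : BTree α → Finset (Finset α)
  | .leaf _ => ∅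
  | .node l r => insert (l.leaves ∪ r.leaves) (l.vertexSet ∪ r.vertexSet)

/-- The list of internal vertices of the tree, recorded as the pairs
(left subtree, right subtree) hanging at each internal vertex. -/
def nodes : BTree α → List (BTree α × BTree α)
  | .leaf _ => []
  | .node l r => (l, r) :: (l.nodes ++ r.nodes)

/-- `meetVertex t i j` is the internal vertex `v_{(i,j)}` at which the paths from the
leaves labeled `i` and `j` towards the root first meet (as the set of its ancestor
leaves); meaningful when `i ≠ j` are both leaf labels of `t`. -/
def meetVertex : BTree α → α → α → Finset α
  | .leaf a, _, _ => {a}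
  | .node l r, i, j =>
    if i ∈ l.leaves ∧ j ∈ l.leaves then l.meetVertex i j
    else if i ∈ r.leaves ∧ j ∈ r.leaves then r.meetVertex i j
    else l.leaves ∪ r.leaves

/-- `S(J) = { v_{(i,j)} : i, j ∈ J, i ≠ j }`. -/
def S (t : BTree α) (J : Finset α) : Finset (Finset α) :=
  ((J ×ˢ J).filter fun p => p.1 ≠ p.2).image fun p => t.meetVertex p.1 p.2

/-- A partition `π` of `I` is `T`-admissible when `S(B) ∩ S(B') = ∅` for every pair of
distinct blocks `B, B'` of `π`. -/
def Admissible (t : BTree α) {I : Finset α} (π : Finpartition I) : Prop :=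
  ∀ B ∈ π.parts, ∀ C ∈ π.parts, B ≠ C → t.S B ∩ t.S C = ∅

/-- A nice total order on the internal vertices of `T`, encoded by an integer-valued
ranking function: it is injective on `V(T)` and is a linear extension of the ancestor
order (a vertex `v` is below `w`, i.e. `w` is on the path from `v` to the root, iff
`v ⊆ w` in the ancestor-leaves representation). -/
def IsNiceOrder (t : BTree α) (ord : Finset α → ℕ) : Prop :=
  Set.InjOn ord ↑t.vertexSet ∧
    ∀ v ∈ t.vertexSet, ∀ w ∈ t.vertexSet, v ⊆ w → ord v ≤ ord w

/-- A nice total order identifying `V(T)` with `{1, …, n}`. -/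
def IsNiceLabeling (t : BTree α) (n : ℕ) (ord : Finset α → ℕ) : Prop :=
  t.IsNiceOrder ord ∧ t.vertexSet.image ord = Finset.Icc 1 n

end BTree

/-- The poset `Ad(T)` of `T`-admissible partitions of `I`, ordered by refinement
(the order is inherited from the refinement order on `Finpartition I`). -/
def AdPartition {α : Type} [DecidableEq α] (T : BTree α) (I : Finset α) : Type :=
  {π : Finpartition I // T.Admissible π}

namespace AdPartition

variable {α : Type} [DecidableEq α] {T : BTree α} {I : Finset α}

instance : PartialOrder (AdPartition T I) := Subtype.partialOrder _

/-- The set `V(π)` of internal vertices of a partition: the union of the `S(B)` over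
the blocks `B` of `π`. -/
def verts (T : BTree α) {I : Finset α} (π : Finpartition I) : Finset (Finset α) :=
  π.parts.sup fun B => T.S B

/-- The edge label `λ(π, τ)` of a covering relation `π ⋖ τ` in `Ad(T)`: the unique
internal vertex `v` with `V(τ) = V(π) ∪ {v}` (extracted here as the union of the
finset `V(τ) \ V(π)`, which is the singleton `{v}` when `π ⋖ τ`). -/
def label (T : BTree α) {I : Finset α} (π τ : AdPartition T I) : Finset α :=
  (verts T τ.1 \ verts T π.1).sup id

/-- The label sequence, with respect to a nice order `ord`, of a saturated chain
recorded as a list of consecutive elements. -/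
def labelSeq (T : BTree α) {I : Finset α} (ord : Finset α → ℕ)
    (c : List (AdPartition T I)) : List ℕ :=
  (c.zip c.tail).map fun p => ord (label T p.1 p.2)

/-- The atom of `Ad(T)` whose unique doubleton block is `{p, q}`, all other blocks
being singletons. -/
def IsAtomPart (T : BTree α) (I : Finset α) (a : AdPartition T I) (p q : α) : Prop :=
  p ≠ q ∧ a.1.parts = insert {p, q} ((I \ {p, q}).image fun x => ({x} : Finset α))

end AdPartition

section LatticeGen

variable {P : Type*} [PartialOrder P]

/-- A subset of a partial order closed under existing pairwise joins and meets. -/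
def IsLatClosed (D : Set P) : Prop :=
  (∀ x ∈ D, ∀ y ∈ D, ∀ z, IsLUB {x, y} z → z ∈ D) ∧
    (∀ x ∈ D, ∀ y ∈ D, ∀ z, IsGLB {x, y} z → z ∈ D)

/-- The sublattice generated by a subset of a partial order: the smallest subset
containing it that is closed under pairwise joins and meets. -/
def latticeGen (s : Set P) : Set P :=
  ⋂₀ {D : Set P | s ⊆ D ∧ IsLatClosed D}

/-- The subset `D`, with the induced join and meet, is a distributive lattice:
`x ∧ (y ∨ z) = (x ∧ y) ∨ (x ∧ z)` for all `x, y, z ∈ D`. -/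
def IsDistribSet (D : Set P) : Prop :=
  ∀ x ∈ D, ∀ y ∈ D, ∀ z ∈ D,
    ∀ yz, IsLUB {y, z} yz → ∀ w, IsGLB {x, yz} w →
      ∀ xy, IsGLB {x, y} xy → ∀ xz, IsGLB {x, z} xz →
        ∀ u, IsLUB {xy, xz} u → w = u

end LatticeGen

namespace BTree

variable {α : Type} [DecidableEq α]

lemma mem_leaves {t : BTree α} {a : α} : a ∈ t.leaves ↔ a ∈ t.leafList := by
  simp [leaves]

lemma leaves_nonempty (t : BTree α) : t.leaves.Nonempty := by
  induction t with
  | leaf a => exact ⟨a, by simp [leaves, leafList]⟩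
  | node l r ihl ihr =>
    obtain ⟨a, ha⟩ := ihl
    exact ⟨a, by simp [mem_leaves, leafList] at ha ⊢; exact Or.inl ha⟩

lemma meetVertex_subset (t : BTree α) (i j : α) : t.meetVertex i j ⊆ t.leaves := by
  induction t with
  | leaf a => simp [meetVertex, leaves, leafList]
  | node l r ihl ihr =>
    have hl : l.leaves ∪ r.leaves = (BTree.node l r).leaves := by
      simp [leaves, leafList]
    simp only [meetVertex]
    split_ifs with h1 h2
    · exact (ihl).trans (by rw [← hl]; exact Finset.subset_union_left)
    · exact (ihr).trans (by rw [← hl]; exact Finset.subset_union_right)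
    · rw [hl]

lemma meetVertex_nonempty (t : BTree α) (i j : α) : (t.meetVertex i j).Nonempty := by
  induction t with
  | leaf a => exact ⟨a, by simp [meetVertex]⟩
  | node l r ihl ihr =>
    simp only [meetVertex]
    split_ifs with h1 h2
    · exact ihl
    · exact ihr
    · obtain ⟨a, ha⟩ := l.leaves_nonempty
      exact ⟨a, Finset.mem_union_left _ ha⟩

lemma mem_S {t : BTree α} {J : Finset α} {v : Finset α} :
    v ∈ t.S J ↔ ∃ i ∈ J, ∃ j ∈ J, i ≠ j ∧ t.meetVertex i j = v := by
  simp only [S, Finset.mem_image, Finset.mem_filter, Finset.mem_product]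
  constructor
  · rintro ⟨⟨i, j⟩, ⟨⟨hi, hj⟩, hne⟩, hv⟩
    exact ⟨i, hi, j, hj, hne, hv⟩
  · rintro ⟨i, hi, j, hj, hne, hv⟩
    exact ⟨⟨i, j⟩, ⟨⟨hi, hj⟩, hne⟩, hv⟩

lemma stmt0_aux (t : BTree α) (ht : t.leafList.Nodup) (J : Finset α)
    (hJ : J ⊆ t.leaves) (hne : J.Nonempty) : (t.S J).card = J.card - 1 := by
  induction t generalizing J with
  | leaf a =>
    have hJa : J = {a} := by
      apply Finset.Subset.antisymm
      · simpa [leaves, leafList] using hJ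
      · obtain ⟨x, hx⟩ := hne
        have : x = a := by simpa [leaves, leafList] using hJ hx
        simpa [← this] using hx
    subst hJa
    have : (BTree.leaf a).S {a} = ∅ := by
      ext v
      simp only [mem_S, Finset.mem_singleton, Finset.notMem_empty, iff_false]
      rintro ⟨i, hi, j, hj, hij, -⟩
      exact hij (hi.trans hj.symm)
    simp [this]
  | node l r ihl ihr =>
    have hnodup := ht
    rw [leafList, List.nodup_append] at hnodup
    obtain ⟨hnl, hnr, hdisj⟩ := hnodup
    have hld : Disjoint l.leaves r.leaves := by
      rw [Finset.disjoint_left]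
      intro a hal har
      exact hdisj a (mem_leaves.mp hal) a (mem_leaves.mp har) rfl
    have hleaves : (BTree.node l r).leaves = l.leaves ∪ r.leaves := by
      simp [leaves, leafList]
    set Jl := J ∩ l.leaves with hJl
    set Jr := J ∩ r.leaves with hJr
    have hJsplit : J = Jl ∪ Jr := by
      rw [hJl, hJr, ← Finset.inter_union_distrib_left]
      rw [hleaves] at hJ
      exact (Finset.inter_eq_left.mpr hJ).symm
    have hJdisj : Disjoint Jl Jr :=
      hld.mono (Finset.inter_subset_right) (Finset.inter_subset_right)
    have hmeet_l : ∀ i ∈ Jl, ∀ j ∈ Jl, (BTree.node l r).meetVertex i j = l.meetVertex i j := by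
      intro i hi j hj
      simp only [meetVertex]
      rw [if_pos ⟨(Finset.mem_inter.mp hi).2, (Finset.mem_inter.mp hj).2⟩]
    have hmeet_r : ∀ i ∈ Jr, ∀ j ∈ Jr, (BTree.node l r).meetVertex i j = r.meetVertex i j := by
      intro i hi j hj
      have hil : i ∉ l.leaves := Finset.disjoint_right.mp hld (Finset.mem_inter.mp hi).2
      simp only [meetVertex]
      rw [if_neg (fun h => hil h.1),
        if_pos ⟨(Finset.mem_inter.mp hi).2, (Finset.mem_inter.mp hj).2⟩]
    by_cases hJrE : Jr = ∅
    · -- J ⊆ l.leaves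
      have hJeq : J = Jl := by rw [hJsplit, hJrE, Finset.union_empty]
      have hS : (BTree.node l r).S J = l.S J := by
        ext v
        simp only [mem_S]
        constructor
        · rintro ⟨i, hi, j, hj, hij, hv⟩
          refine ⟨i, hi, j, hj, hij, ?_⟩
          rw [← hv, hmeet_l i (hJeq ▸ hi) j (hJeq ▸ hj)]
        · rintro ⟨i, hi, j, hj, hij, hv⟩
          refine ⟨i, hi, j, hj, hij, ?_⟩
          rw [hmeet_l i (hJeq ▸ hi) j (hJeq ▸ hj), hv]
      rw [hS]
      exact ihl hnl J (by rw [hJeq]; exact Finset.inter_subset_right) hne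
    · by_cases hJlE : Jl = ∅
      · have hJeq : J = Jr := by rw [hJsplit, hJlE, Finset.empty_union]
        have hS : (BTree.node l r).S J = r.S J := by
          ext v
          simp only [mem_S]
          constructor
          · rintro ⟨i, hi, j, hj, hij, hv⟩
            refine ⟨i, hi, j, hj, hij, ?_⟩
            rw [← hv, hmeet_r i (hJeq ▸ hi) j (hJeq ▸ hj)]
          · rintro ⟨i, hi, j, hj, hij, hv⟩
            refine ⟨i, hi, j, hj, hij, ?_⟩
            rw [hmeet_r i (hJeq ▸ hi) j (hJeq ▸ hj), hv]
        rw [hS]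
        exact ihr hnr J (by rw [hJeq]; exact Finset.inter_subset_right) hne
      · -- both nonempty
        have hJlne : Jl.Nonempty := Finset.nonempty_iff_ne_empty.mpr hJlE
        have hJrne : Jr.Nonempty := Finset.nonempty_iff_ne_empty.mpr hJrE
        have hS : (BTree.node l r).S J =
            insert (l.leaves ∪ r.leaves) (l.S Jl ∪ r.S Jr) := by
          ext v
          simp only [mem_S, Finset.mem_insert, Finset.mem_union]
          constructor
          · rintro ⟨i, hi, j, hj, hij, hv⟩
            by_cases hil : i ∈ l.leaves <;> by_cases hjl : j ∈ l.leaves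
            · refine Or.inr (Or.inl ⟨i, Finset.mem_inter.mpr ⟨hi, hil⟩,
                j, Finset.mem_inter.mpr ⟨hj, hjl⟩, hij, ?_⟩)
              rw [← hv, hmeet_l i (Finset.mem_inter.mpr ⟨hi, hil⟩)
                j (Finset.mem_inter.mpr ⟨hj, hjl⟩)]
            · refine Or.inl ?_
              rw [← hv]
              simp only [meetVertex]
              rw [if_neg (fun h => hjl h.2), if_neg (fun h =>
                Finset.disjoint_left.mp hld hil h.1)]
            · refine Or.inl ?_
              rw [← hv]
              simp only [meetVertex]
              rw [if_neg (fun h => hil h.1), if_neg (fun h =>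
                Finset.disjoint_left.mp hld hjl h.2)]
            · have hir : i ∈ r.leaves := by
                have := hJ hi
                rw [hleaves, Finset.mem_union] at this
                tauto
              have hjr : j ∈ r.leaves := by
                have := hJ hj
                rw [hleaves, Finset.mem_union] at this
                tauto
              refine Or.inr (Or.inr ⟨i, Finset.mem_inter.mpr ⟨hi, hir⟩,
                j, Finset.mem_inter.mpr ⟨hj, hjr⟩, hij, ?_⟩)
              rw [← hv, hmeet_r i (Finset.mem_inter.mpr ⟨hi, hir⟩)
                j (Finset.mem_inter.mpr ⟨hj, hjr⟩)]
          · rintro (hv | ⟨i, hi, j, hj, hij, hv⟩ | ⟨i, hi, j, hj, hij, hv⟩)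
            · obtain ⟨i, hi⟩ := hJlne
              obtain ⟨j, hj⟩ := hJrne
              have hij : i ≠ j := fun h =>
                Finset.disjoint_left.mp hJdisj hi (h ▸ hj)
              refine ⟨i, (Finset.mem_inter.mp hi).1, j, (Finset.mem_inter.mp hj).1, hij, ?_⟩
              simp only [meetVertex]
              rw [if_neg (fun h => Finset.disjoint_right.mp hld
                  (Finset.mem_inter.mp hj).2 h.2),
                if_neg (fun h => Finset.disjoint_left.mp hld
                  (Finset.mem_inter.mp hi).2 h.1), hv]
            · exact ⟨i, (Finset.mem_inter.mp hi).1, j, (Finset.mem_inter.mp hj).1, hij,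
                by rw [hmeet_l i hi j hj, hv]⟩
            · exact ⟨i, (Finset.mem_inter.mp hi).1, j, (Finset.mem_inter.mp hj).1, hij,
                by rw [hmeet_r i hi j hj, hv]⟩
        have hroot_not : l.leaves ∪ r.leaves ∉ l.S Jl ∪ r.S Jr := by
          intro h
          rw [Finset.mem_union] at h
          obtain ⟨a, ha⟩ := r.leaves_nonempty
          obtain ⟨b, hb⟩ := l.leaves_nonempty
          rcases h with h | h
          · rw [mem_S] at h
            obtain ⟨i, -, j, -, -, hv⟩ := h
            have := (hv ▸ l.meetVertex_subset i j) (Finset.mem_union_right _ ha)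
            exact Finset.disjoint_right.mp hld ha this
          · rw [mem_S] at h
            obtain ⟨i, -, j, -, -, hv⟩ := h
            have := (hv ▸ r.meetVertex_subset i j) (Finset.mem_union_left _ hb)
            exact Finset.disjoint_left.mp hld hb this
        have hSdisj : Disjoint (l.S Jl) (r.S Jr) := by
          rw [Finset.disjoint_left]
          intro v hvl hvr
          rw [mem_S] at hvl hvr
          obtain ⟨i, -, j, -, -, hv⟩ := hvl
          obtain ⟨i', -, j', -, -, hv'⟩ := hvr
          obtain ⟨a, ha⟩ := hv ▸ l.meetVertex_nonempty i j
          exact Finset.disjoint_left.mp hld (hv ▸ l.meetVertex_subset i j <| ha)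
            (hv' ▸ r.meetVertex_subset i' j' <| ha)
        rw [hS, Finset.card_insert_of_notMem hroot_not, Finset.card_union_of_disjoint hSdisj,
          ihl hnl Jl Finset.inter_subset_right hJlne,
          ihr hnr Jr Finset.inter_subset_right hJrne,
          hJsplit, Finset.card_union_of_disjoint hJdisj]
        have h1 : 1 ≤ Jl.card := Finset.card_pos.mpr hJlne
        have h2 : 1 ≤ Jr.card := Finset.card_pos.mpr hJrne
        omega

end BTree

/-- For every tree `T` on a finite set `I` and every nonempty `J ⊆ I`,
the set `S(J) = { v_{(i,j)} : i, j ∈ J, i ≠ j }` has cardinality `|J| − 1`. -/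
theorem stmt0 {α : Type} [DecidableEq α] (I : Finset α) (T : BTree α)
    (hT : T.IsTreeOn I) (J : Finset α) (hJI : J ⊆ I) (hJ : J.Nonempty) :
    (T.S J).card = J.card - 1 :=
  BTree.stmt0_aux T hT.1 J (hT.2 ▸ hJI) hJ
end

section
/- Let T be a tree on a finite set I and let π, τ be T-admissible partitions of I. Then their common refinement σ, whose blocks are the nonempty sets B ∩ C with B a block of π and C a block of τ, is again T-admissible, and σ is the meet of π and τ in the poset Ad(T) ordered by refinement. -/
open Finset

/-! Since `S` is monotone (`D ⊆ B → S(D) ⊆ S(B)`), shrinking blocks preserves the disjointness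
of their `S`-sets. Two distinct blocks `B ∩ C` and `B' ∩ C'` of `σ` have `B ≠ B'` or `C ≠ C'`,
so `σ` inherits admissibility from `π` or from `τ`. Moreover `σ` is the meet `π ⊓ τ` of
finpartitions, hence also the meet in the subposet `Ad(T)`. -/

lemma Subtype.isGLB_pair_mk_inf {P : Type*} [SemilatticeInf P] {p : P → Prop} (a b : Subtype p)
    (h : p (a.1 ⊓ b.1)) : IsGLB ({a, b} : Set (Subtype p)) ⟨a.1 ⊓ b.1, h⟩ := by
  refine ⟨?_, fun c hc => ?_⟩
  · rw [lowerBounds_insert, lowerBounds_singleton]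
    exact ⟨show a.1 ⊓ b.1 ≤ a.1 from inf_le_left, show a.1 ⊓ b.1 ≤ b.1 from inf_le_right⟩
  · rw [lowerBounds_insert, lowerBounds_singleton] at hc
    exact show c.1 ≤ a.1 ⊓ b.1 from le_inf hc.1 hc.2

namespace BTree

variable {α : Type} [DecidableEq α]

lemma S_mono (t : BTree α) {D B : Finset α} (h : D ⊆ B) : t.S D ⊆ t.S B :=
  image_subset_image (filter_subset_filter _ (product_subset_product h h))

lemma S_inter_S_eq_empty_of_subset (t : BTree α) {B C D E : Finset α}
    (hBC : t.S B ∩ t.S C = ∅) (hDB : D ⊆ B) (hEC : E ⊆ C) : t.S D ∩ t.S E = ∅ :=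
  subset_empty.1 (hBC ▸ inter_subset_inter (t.S_mono hDB) (t.S_mono hEC))

lemma Admissible.inf {t : BTree α} {I : Finset α} {π τ : Finpartition I}
    (hπ : t.Admissible π) (hτ : t.Admissible τ) : t.Admissible (π ⊓ τ) := by
  intro D hD E hE hDE
  obtain ⟨⟨B, C⟩, hBC, rfl⟩ := mem_image.1 (mem_of_mem_erase hD)
  obtain ⟨⟨B', C'⟩, hBC', rfl⟩ := mem_image.1 (mem_of_mem_erase hE)
  rw [mem_product] at hBC hBC'
  by_cases hB : B = B'
  · have hC : C ≠ C' := by rintro rfl; exact hDE (by rw [hB])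
    exact t.S_inter_S_eq_empty_of_subset (hτ C hBC.2 C' hBC'.2 hC) inter_subset_right
      inter_subset_right
  · exact t.S_inter_S_eq_empty_of_subset (hπ B hBC.1 B' hBC'.1 hB) inter_subset_left
      inter_subset_left

end BTree

theorem stmt1_general {α : Type} [DecidableEq α] (I : Finset α) (T : BTree α)
    (π τ : AdPartition T I) (σ : Finpartition I)
    (hσ : σ.parts = ((π.1.parts ×ˢ τ.1.parts).image fun BC => BC.1 ∩ BC.2).filter
      fun B => B.Nonempty) :
    ∃ h : T.Admissible σ,
      IsGLB ({π, τ} : Set (AdPartition T I)) (⟨σ, h⟩ : AdPartition T I) := by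
  have hσ_inf : σ = π.1 ⊓ τ.1 := by
    ext D
    simp only [hσ, Finpartition.parts_inf, mem_filter, mem_erase, nonempty_iff_ne_empty]
    exact and_comm
  subst hσ_inf
  exact ⟨π.2.inf τ.2, Subtype.isGLB_pair_mk_inf π τ (π.2.inf τ.2)⟩

/-- the common refinement `σ` of two `T`-admissible partitions `π, τ`
(whose blocks are the nonempty intersections `B ∩ C` of a block `B` of `π` with a
block `C` of `τ`) is again `T`-admissible, and it is the meet of `π` and `τ` in the
refinement order on `Ad(T)`. -/
theorem stmt1 {α : Type} [DecidableEq α] (I : Finset α) (T : BTree α)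
    (hT : T.IsTreeOn I) (π τ : AdPartition T I) (σ : Finpartition I)
    (hσ : σ.parts = ((π.1.parts ×ˢ τ.1.parts).image fun BC => BC.1 ∩ BC.2).filter
      fun B => B.Nonempty) :
    ∃ h : T.Admissible σ,
      IsGLB ({π, τ} : Set (AdPartition T I)) (⟨σ, h⟩ : AdPartition T I) :=
  stmt1_general I T π τ σ hσ
end

section
/- The lattices Ad(T) are not semimodular in general: there exist a finite set I (one may take |I| = 4), a tree T on I, and elements x, y ∈ Ad(T) such that x and y both cover x ∧ y, but x ∨ y does not cover x. -/
open Finset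

/-! In the tree `((1,2),(3,4))` both pairs `{2,3}` and `{1,4}` meet at the root, so an admissible
partition cannot put `2, 3` and `1, 4` in two different blocks. Hence the join in `Ad(T)` of the
atoms `{1}{23}{4}` and `{14}{2}{3}` is the one-block partition, which lies two steps above the
first atom: `{1}{23}{4} < {1}{234} < {1234}`. That the atoms cover the discrete partition is seen
by counting blocks, since strict refinement strictly increases their number. -/

namespace Finpartition

variable {α : Type*} [DecidableEq α] {s : Finset α} {P Q : Finpartition s}

theorem eq_of_le_of_card_parts_le (hPQ : P ≤ Q) (hcard : #P.parts ≤ #Q.parts) : P = Q := by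
  choose g hgP hgle using fun c (hc : c ∈ Q.parts) ↦ exists_le_of_le hPQ hc
  have hg_inj : ∀ c c' hc hc', g c hc = g c' hc' → c = c' := by
    intro c c' hc hc' h
    obtain ⟨x, hx⟩ := P.nonempty_of_mem_parts (hgP c hc)
    exact Q.eq_of_mem_parts hc hc' (hgle c hc hx) (hgle c' hc' (h ▸ hx))
  have hg_surj := surj_on_of_inj_on_of_card_le g hgP hg_inj hcard
  refine le_antisymm hPQ fun c hc ↦ ⟨g c hc, hgP c hc, fun x hxc ↦ ?_⟩
  obtain ⟨b, hb, hxb⟩ := P.exists_mem (Q.le hc hxc)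
  obtain ⟨c', hc', rfl⟩ := hg_surj b hb
  obtain rfl := Q.eq_of_mem_parts hc' hc (hgle c' hc' hxb) hxc
  exact hxb

theorem card_parts_lt_of_lt (h : P < Q) : #Q.parts < #P.parts :=
  (card_mono h.le).lt_of_ne fun hcard ↦ h.ne (eq_of_le_of_card_parts_le h.le hcard.ge)

theorem covBy_of_le_of_card_parts_eq_add_one (hPQ : P ≤ Q) (hcard : #P.parts = #Q.parts + 1) :
    P ⋖ Q :=
  ⟨hPQ.lt_of_ne (by rintro rfl; omega), fun R hPR hRQ ↦ by
    have := card_parts_lt_of_lt hPR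
    have := card_parts_lt_of_lt hRQ
    omega⟩

end Finpartition

theorem isGLB_pair_of_covBy_of_isBot {P : Type*} [PartialOrder P] {m x y : P} (hm : IsBot m)
    (hx : m ⋖ x) (hy : m ⋖ y) (hxy : x ≠ y) : IsGLB {x, y} m := by
  refine ⟨by simp [hx.le, hy.le], fun w hw ↦ ?_⟩
  have hwx : w ≤ x := hw (Set.mem_insert x {y})
  have hwy : w ≤ y := hw (Set.mem_insert_of_mem x rfl)
  rcases hx.eq_or_eq (hm w) hwx with hwm | rfl
  · exact hwm.le
  · rcases hy.eq_or_eq hx.le hwy with hwm | hwy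
    · exact absurd hwm hx.ne'
    · exact absurd hwy hxy

namespace BTree

variable {α : Type} [DecidableEq α] {t : BTree α}

theorem meetVertex_mem_S {J : Finset α} {i j : α} (hi : i ∈ J) (hj : j ∈ J) (hij : i ≠ j) :
    t.meetVertex i j ∈ t.S J :=
  mem_image.2 ⟨(i, j), mem_filter.2 ⟨mem_product.2 ⟨hi, hj⟩, hij⟩, rfl⟩

theorem S_singleton (a : α) : t.S {a} = ∅ := by
  simp [S]

theorem admissible_bot (I : Finset α) : t.Admissible (⊥ : Finpartition I) := by
  intro B hB C _ _
  obtain ⟨a, -, rfl⟩ := Finpartition.mem_bot_iff.1 hB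
  simp [S_singleton]

theorem Admissible.eq_of_meetVertex_eq {I : Finset α} {π : Finpartition I} (h : t.Admissible π)
    {B C : Finset α} (hB : B ∈ π.parts) (hC : C ∈ π.parts) {i j k l : α} (hi : i ∈ B)
    (hj : j ∈ B) (hij : i ≠ j) (hk : k ∈ C) (hl : l ∈ C) (hkl : k ≠ l)
    (hmeet : t.meetVertex i j = t.meetVertex k l) : B = C := by
  by_contra hBC
  have hmem := mem_inter.2 ⟨meetVertex_mem_S hi hj hij, hmeet ▸ meetVertex_mem_S hk hl hkl⟩
  simp [h B hB C hC hBC] at hmem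

end BTree

namespace AdPartition

variable {α : Type} [DecidableEq α] {T : BTree α} {I : Finset α}

instance : OrderBot (AdPartition T I) where
  bot := ⟨⊥, T.admissible_bot I⟩
  bot_le π := (bot_le : ⊥ ≤ π.1)

theorem covBy_of_le_of_card_parts_eq_add_one {π τ : AdPartition T I} (h : π ≤ τ)
    (hcard : #π.1.parts = #τ.1.parts + 1) : π ⋖ τ :=
  CovBy.of_image (OrderEmbedding.subtype _)
    (Finpartition.covBy_of_le_of_card_parts_eq_add_one h hcard)

end AdPartition

namespace NotSemimodular

open BTree

def tree : BTree ℕ := .node (.node (.leaf 1) (.leaf 2)) (.node (.leaf 3) (.leaf 4))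

def ground : Finset ℕ := {1, 2, 3, 4}

def join23 : AdPartition tree ground :=
  ⟨⟨{{1}, {2, 3}, {4}}, by decide, by decide, by decide⟩, by unfold Admissible; decide⟩

def join14 : AdPartition tree ground :=
  ⟨⟨{{1, 4}, {2}, {3}}, by decide, by decide, by decide⟩, by unfold Admissible; decide⟩

def join234 : AdPartition tree ground :=
  ⟨⟨{{1}, {2, 3, 4}}, by decide, by decide, by decide⟩, by unfold Admissible; decide⟩

theorem bot_covBy_join23 : ⊥ ⋖ join23 :=
  AdPartition.covBy_of_le_of_card_parts_eq_add_one bot_le (by decide)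

theorem bot_covBy_join14 : ⊥ ⋖ join14 :=
  AdPartition.covBy_of_le_of_card_parts_eq_add_one bot_le (by decide)

theorem join23_ne_join14 : join23 ≠ join14 :=
  ne_of_apply_ne (fun π ↦ π.1.parts) (by decide)

theorem join23_lt_join234 : join23 < join234 :=
  lt_of_le_of_ne
    (show ∀ ⦃b⦄, b ∈ join23.1.parts → ∃ c ∈ join234.1.parts, b ≤ c by decide)
    (ne_of_apply_ne (fun π ↦ #π.1.parts) (by decide))

theorem join234_lt_of_mem_upperBounds {j : AdPartition tree ground}
    (hj : j ∈ upperBounds {join23, join14}) : join234 < j := by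
  obtain ⟨B, hB, h23⟩ := hj (Set.mem_insert _ _) (show {2, 3} ∈ join23.1.parts by decide)
  obtain ⟨C, hC, h14⟩ :=
    hj (Set.mem_insert_of_mem _ rfl) (show {1, 4} ∈ join14.1.parts by decide)
  obtain rfl : B = C := j.2.eq_of_meetVertex_eq (i := 2) (j := 3) (k := 1) (l := 4) hB hC
    (h23 (by decide)) (h23 (by decide)) (by decide) (h14 (by decide)) (h14 (by decide))
    (by decide) (by decide)
  have hB_eq : B = ground :=
    (j.1.le hB).antisymm ((show {1, 4} ∪ {2, 3} = ground by decide) ▸ union_subset h14 h23)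
  refine lt_of_le_of_ne (fun b hb ↦ ⟨B, hB, hB_eq ▸ join234.1.le hb⟩) ?_
  rintro rfl
  exact absurd (hB_eq ▸ hB) (by decide)

end NotSemimodular

/-- the lattices `Ad(T)` are not semimodular in general: there are a
finite set `I` with `|I| = 4`, a tree `T` on `I`, and `x, y ∈ Ad(T)` such that `x`
and `y` both cover `x ∧ y` but `x ∨ y` does not cover `x`. -/
theorem stmt9 :
    ∃ (I : Finset ℕ) (T : BTree ℕ), T.IsTreeOn I ∧ I.card = 4 ∧
      ∃ x y : AdPartition T I, ∃ m : AdPartition T I,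
        IsGLB ({x, y} : Set (AdPartition T I)) m ∧ m ⋖ x ∧ m ⋖ y ∧
        ∀ j : AdPartition T I, IsLUB ({x, y} : Set (AdPartition T I)) j →
          ¬ x ⋖ j := by
  open NotSemimodular in
  exact ⟨ground, tree, ⟨by decide, rfl⟩, rfl, join23, join14, ⊥,
    isGLB_pair_of_covBy_of_isBot isBot_bot bot_covBy_join23 bot_covBy_join14 join23_ne_join14,
    bot_covBy_join23, bot_covBy_join14,
    fun _ hj hcov ↦ hcov.2 join23_lt_join234 (join234_lt_of_mem_upperBounds hj.1)⟩
end

section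
/- Let T be a tree on a finite set I. Let a_1, …, a_k be atoms of Ad(T), say a_r is the partition with doubleton block {i_r, j_r}, whose associated vertices v_r = v_{(i_r, j_r)} are pairwise distinct. Then the join a_1 ∨ a_2 ∨ ⋯ ∨ a_k in Ad(T) satisfies V(a_1 ∨ ⋯ ∨ a_k) = {v_1, …, v_k}. -/
open Finset

/-! ### Auxiliary lemmas -/

namespace BTree

variable {α : Type} [DecidableEq α]

lemma leaves_node (l r : BTree α) : (node l r).leaves = l.leaves ∪ r.leaves := by
  simp [leaves, leafList]

lemma nodup_node {l r : BTree α} (h : (node l r).leafList.Nodup) :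
    l.leafList.Nodup ∧ r.leafList.Nodup ∧ Disjoint l.leaves r.leaves := by
  rw [leafList, List.nodup_append] at h
  refine ⟨h.1, h.2.1, ?_⟩
  rw [Finset.disjoint_left]
  intro x hx hx'
  exact h.2.2 x (by simpa [leaves] using hx) x (by simpa [leaves] using hx') rfl

lemma vertex_subset_leaves : ∀ {t : BTree α} {u}, u ∈ t.vertexSet → u ⊆ t.leaves
  | .leaf _, u, h => by simp [vertexSet] at h
  | .node l r, u, h => by
    rw [vertexSet, Finset.mem_insert, Finset.mem_union] at h
    rw [leaves_node]
    rcases h with rfl | h | h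
    · exact Finset.Subset.refl _
    · exact (vertex_subset_leaves h).trans Finset.subset_union_left
    · exact (vertex_subset_leaves h).trans Finset.subset_union_right

lemma meet_subset_leaves : ∀ (t : BTree α) (i j : α), t.meetVertex i j ⊆ t.leaves
  | .leaf a, i, j => by simp [meetVertex, leaves, leafList]
  | .node l r, i, j => by
    rw [meetVertex, leaves_node]
    split_ifs with h1 h2
    · exact (meet_subset_leaves l i j).trans Finset.subset_union_left
    · exact (meet_subset_leaves r i j).trans Finset.subset_union_right
    · exact Finset.Subset.refl _

lemma mem_meet_left : ∀ (t : BTree α) {i : α} (j : α), i ∈ t.leaves → i ∈ t.meetVertex i j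
  | .leaf a, i, j, h => by
    simp only [leaves, leafList, List.toFinset_cons, List.toFinset_nil,
      insert_empty_eq, Finset.mem_singleton] at h
    simp [meetVertex, h]
  | .node l r, i, j, h => by
    rw [meetVertex]
    split_ifs with h1 h2
    · exact mem_meet_left l j h1.1
    · exact mem_meet_left r j h2.1
    · rw [leaves_node] at h; exact h

lemma mem_meet_right : ∀ (t : BTree α) (i : α) {j : α}, j ∈ t.leaves → j ∈ t.meetVertex i j
  | .leaf a, i, j, h => by
    simp only [leaves, leafList, List.toFinset_cons, List.toFinset_nil,
      insert_empty_eq, Finset.mem_singleton] at h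
    simp [meetVertex, h]
  | .node l r, i, j, h => by
    rw [meetVertex]
    split_ifs with h1 h2
    · exact mem_meet_right l i h1.2
    · exact mem_meet_right r i h2.2
    · rw [leaves_node] at h; exact h

lemma meet_mem_vertexSet : ∀ (t : BTree α) {i j : α}, i ∈ t.leaves → j ∈ t.leaves →
    i ≠ j → t.meetVertex i j ∈ t.vertexSet
  | .leaf a, i, j, hi, hj, hij => by
    simp only [leaves, leafList, List.toFinset_cons, List.toFinset_nil,
      insert_empty_eq, Finset.mem_singleton] at hi hj
    exact absurd (hi.trans hj.symm) hij
  | .node l r, i, j, hi, hj, hij => by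
    rw [meetVertex, vertexSet]
    split_ifs with h1 h2
    · exact Finset.mem_insert_of_mem (Finset.mem_union_left _
        (meet_mem_vertexSet l h1.1 h1.2 hij))
    · exact Finset.mem_insert_of_mem (Finset.mem_union_right _
        (meet_mem_vertexSet r h2.1 h2.2 hij))
    · exact Finset.mem_insert_self _ _

lemma meet_comm : ∀ (t : BTree α) (i j : α), t.meetVertex i j = t.meetVertex j i
  | .leaf _, _, _ => rfl
  | .node l r, i, j => by
    rw [meetVertex, meetVertex]
    have hc1 : (j ∈ l.leaves ∧ i ∈ l.leaves) ↔ (i ∈ l.leaves ∧ j ∈ l.leaves) := and_comm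
    have hc2 : (j ∈ r.leaves ∧ i ∈ r.leaves) ↔ (i ∈ r.leaves ∧ j ∈ r.leaves) := and_comm
    simp only [hc1, hc2]
    split_ifs with h1 h2
    · exact meet_comm l i j
    · exact meet_comm r i j
    · rfl

lemma vertex_chain : ∀ {t : BTree α}, t.leafList.Nodup → ∀ {u w : Finset α} {x : α},
    u ∈ t.vertexSet → w ∈ t.vertexSet → x ∈ u → x ∈ w → u ⊆ w ∨ w ⊆ u
  | .leaf _, _, u, w, x, hu, _, _, _ => by simp [vertexSet] at hu
  | .node l r, hn, u, w, x, hu, hw, hxu, hxw => by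
    obtain ⟨hnl, hnr, hdisj⟩ := nodup_node hn
    rw [vertexSet, Finset.mem_insert, Finset.mem_union] at hu hw
    rcases hu with rfl | hu | hu
    · right
      rcases hw with rfl | hw | hw
      · exact Finset.Subset.refl _
      · exact (vertex_subset_leaves hw).trans Finset.subset_union_left
      · exact (vertex_subset_leaves hw).trans Finset.subset_union_right
    · rcases hw with rfl | hw | hw
      · exact Or.inl ((vertex_subset_leaves hu).trans Finset.subset_union_left)
      · exact vertex_chain hnl hu hw hxu hxw
      · exact absurd (vertex_subset_leaves hw hxw)
          (Finset.disjoint_left.mp hdisj (vertex_subset_leaves hu hxu))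
    · rcases hw with rfl | hw | hw
      · exact Or.inl ((vertex_subset_leaves hu).trans Finset.subset_union_right)
      · exact absurd (vertex_subset_leaves hu hxu)
          (Finset.disjoint_left.mp hdisj (vertex_subset_leaves hw hxw))
      · exact vertex_chain hnr hu hw hxu hxw

lemma meet_min : ∀ {t : BTree α}, t.leafList.Nodup → ∀ {u : Finset α} {i j : α},
    u ∈ t.vertexSet → i ∈ u → j ∈ u → t.meetVertex i j ⊆ u
  | .leaf _, _, u, i, j, hu, _, _ => by simp [vertexSet] at hu
  | .node l r, hn, u, i, j, hu, hi, hj => by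
    obtain ⟨hnl, hnr, hdisj⟩ := nodup_node hn
    rw [vertexSet, Finset.mem_insert, Finset.mem_union] at hu
    rcases hu with rfl | hu | hu
    · exact leaves_node l r ▸ meet_subset_leaves (BTree.node l r) i j
    · have hil : i ∈ l.leaves := vertex_subset_leaves hu hi
      have hjl : j ∈ l.leaves := vertex_subset_leaves hu hj
      rw [meetVertex, if_pos ⟨hil, hjl⟩]
      exact meet_min hnl hu hi hj
    · have hir : i ∈ r.leaves := vertex_subset_leaves hu hi
      have hjr : j ∈ r.leaves := vertex_subset_leaves hu hj
      rw [meetVertex, if_neg, if_pos ⟨hir, hjr⟩]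
      · exact meet_min hnr hu hi hj
      · rintro ⟨hil, -⟩
        exact Finset.disjoint_left.mp hdisj hil hir

lemma meet_step {t : BTree α} (hn : t.leafList.Nodup) {i j k : α}
    (hi : i ∈ t.leaves) (hj : j ∈ t.leaves) (hk : k ∈ t.leaves)
    (hij : i ≠ j) (hjk : j ≠ k) (hik : i ≠ k)
    (hlt : t.meetVertex i j ⊂ t.meetVertex j k) :
    t.meetVertex i k = t.meetVertex j k := by
  have hA := meet_mem_vertexSet t hi hj hij
  have hC := meet_mem_vertexSet t hi hk hik
  have hB := meet_mem_vertexSet t hj hk hjk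
  have hCB : t.meetVertex i k ⊆ t.meetVertex j k :=
    meet_min hn hB (hlt.subset (mem_meet_left t j hi)) (mem_meet_right t j hk)
  rcases vertex_chain hn hC hA (mem_meet_left t k hi) (mem_meet_left t j hi) with h | h
  · exfalso
    have hBA : t.meetVertex j k ⊆ t.meetVertex i j :=
      meet_min hn hA (mem_meet_right t i hj) (h (mem_meet_right t i hk))
    exact hlt.ne (Finset.Subset.antisymm hlt.subset hBA)
  · exact Finset.Subset.antisymm hCB
      (meet_min hn hC (h (mem_meet_right t i hj)) (mem_meet_right t i hk))

end BTree

section Chains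

variable {α : Type} {E : α → α → Prop}

lemma chain_forall {P : α → Prop} (hEl : ∀ {x y}, E x y → P y) :
    ∀ (x : α) (l : List α), List.Chain E x l → ∀ z ∈ l, P z := by
  intro x l h
  induction l generalizing x with
  | nil => simp
  | cons b l ih =>
    intro z hz
    have h' : List.IsChain E (x :: b :: l) := h
    rcases List.mem_cons.mp hz with rfl | hz
    · exact hEl (List.isChain_cons_cons.mp h').1
    · exact ih b (List.isChain_cons_cons.mp h').2 z hz

lemma chain_eqvGen : ∀ (x : α) (l : List α), (x :: l).Chain' E →
    ∀ z ∈ x :: l, Relation.EqvGen E x z := by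
  intro x l
  induction l generalizing x with
  | nil =>
    intro _ z hz
    rw [List.mem_singleton] at hz
    subst hz
    exact Relation.EqvGen.refl z
  | cons w l ih =>
    intro hch z hz
    have hxw : E x w := (List.isChain_cons_cons.mp hch).1
    rcases List.mem_cons.mp hz with rfl | hz
    · exact Relation.EqvGen.refl z
    · exact Relation.EqvGen.trans _ _ _ (Relation.EqvGen.rel _ _ hxw)
        (ih w (List.isChain_cons_cons.mp hch).2 z hz)

lemma chain'_mid : ∀ (l1 : List α) {u w : α} {l2 : List α},
    (l1 ++ u :: w :: l2).Chain' E → E u w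
  | [], _, _, _, h => (List.isChain_cons_cons.mp h).1
  | _ :: l1, _, _, _, h => chain'_mid l1 h.tail

lemma eqvGen_chain (hsym : ∀ {x y}, E x y → E y x) {x y : α}
    (h : Relation.EqvGen E x y) :
    ∃ l : List α, l.Chain' E ∧ l.head? = some x ∧ l.getLast? = some y := by
  induction h with
  | rel a b hab =>
    exact ⟨[a, b], List.isChain_cons_cons.mpr ⟨hab, List.isChain_singleton b⟩, rfl, by simp⟩
  | refl a => exact ⟨[a], List.isChain_singleton a, rfl, by simp⟩
  | symm a b _ ih =>
    obtain ⟨l, hch, hh, hl⟩ := ih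
    refine ⟨l.reverse, ?_, ?_, ?_⟩
    · show List.IsChain _ _
      rw [List.isChain_reverse]
      exact hch.imp (fun _ _ h => hsym h)
    · rw [List.head?_reverse, hl]
    · rw [List.getLast?_reverse, hh]
  | trans a b c _ _ ih1 ih2 =>
    obtain ⟨l, hch, hh, hl⟩ := ih1
    obtain ⟨m, hchm, hhm, hlm⟩ := ih2
    obtain ⟨lt, rfl⟩ : ∃ lt, l = a :: lt := by
      cases l with
      | nil => simp at hh
      | cons a' lt =>
        simp only [List.head?_cons, Option.some.injEq] at hh
        exact ⟨lt, by rw [hh]⟩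
    obtain ⟨mt, rfl⟩ : ∃ mt, m = b :: mt := by
      cases m with
      | nil => simp at hhm
      | cons b' mt =>
        simp only [List.head?_cons, Option.some.injEq] at hhm
        exact ⟨mt, by rw [hhm]⟩
    cases mt with
    | nil =>
      have : b = c := by simpa using hlm
      exact ⟨a :: lt, hch, rfl, this ▸ hl⟩
    | cons d mt' =>
      refine ⟨(a :: lt) ++ (d :: mt'), ?_, rfl, ?_⟩
      · refine List.IsChain.append hch hchm.tail ?_
        intro z hz w hw
        simp only [List.head?_cons, Option.mem_def, Option.some.injEq] at hw
        have hz' : z = b := by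
          rw [Option.mem_def, hl] at hz
          exact (Option.some.injEq _ _ ▸ hz).symm ▸ rfl
        subst hz' hw
        exact (List.isChain_cons_cons.mp hchm).1
      · rw [List.getLast?_append_of_ne_nil _ (List.cons_ne_nil d mt')]
        rw [List.getLast?_cons_cons] at hlm
        exact hlm

end Chains

section MeetChain

open BTree

variable {α : Type} [DecidableEq α]

lemma chain_meet {t : BTree α} (hn : t.leafList.Nodup) (E : α → α → Prop)
    (hEl : ∀ {x y}, E x y → x ∈ t.leaves ∧ y ∈ t.leaves)
    (hEne : ∀ {x y}, E x y → x ≠ y)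
    (hEu : ∀ {x y u w}, E x y → E u w → t.meetVertex x y = t.meetVertex u w →
      (u = x ∧ w = y) ∨ (u = y ∧ w = x)) :
    ∀ (n : ℕ) (l : List α), l.length ≤ n → l.Chain' E → ∀ x y, l.head? = some x →
      l.getLast? = some y → x ≠ y →
      ∃ l1 u w l2, l = l1 ++ u :: w :: l2 ∧ t.meetVertex x y = t.meetVertex u w := by
  intro n
  induction n with
  | zero =>
    intro l hl
    rw [Nat.le_zero, List.length_eq_zero_iff] at hl
    subst hl
    intro _ x y hhd
    simp at hhd
  | succ n IH =>
    intro l hlen hch x y hhd hls hne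
    rcases l with _ | ⟨x0, _ | ⟨x1, rest⟩⟩
    · simp at hhd
    · simp only [List.head?_cons, Option.some.injEq] at hhd
      have hls' : x0 = y := by simpa using hls
      exact absurd (hhd.symm.trans hls') hne
    · simp only [List.head?_cons, Option.some.injEq] at hhd
      subst hhd
      have hE01 : E x0 x1 := (List.isChain_cons_cons.mp hch).1
      have hch' : (x1 :: rest).Chain' E := hch.tail
      have hls' : (x1 :: rest).getLast? = some y := by
        rw [List.getLast?_cons_cons] at hls; exact hls
      by_cases hx1y : x1 = y
      · subst hx1y
        exact ⟨[], x0, x1, rest, rfl, rfl⟩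
      · have hlen' : (x1 :: rest).length ≤ n := by
          simp only [List.length_cons] at hlen ⊢; omega
        obtain ⟨l1, u, w, l2, heq, hm⟩ := IH (x1 :: rest) hlen' hch' x1 y rfl hls' hx1y
        have hEuw : E u w := chain'_mid l1 (heq ▸ hch')
        have hx0l : x0 ∈ t.leaves := (hEl hE01).1
        have hx1l : x1 ∈ t.leaves := (hEl hE01).2
        have hchain : List.Chain E x0 (x1 :: rest) := hch
        have hymem : y ∈ x1 :: rest :=
          List.mem_of_mem_getLast? (Option.mem_def.mpr hls')
        have hyl : y ∈ t.leaves :=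
          chain_forall (E := E) (P := fun z => z ∈ t.leaves)
            (fun {x y} h => (hEl h).2) x0 (x1 :: rest) hchain y hymem
        have hx01 : x0 ≠ x1 := hEne hE01
        have hA : t.meetVertex x0 x1 ∈ t.vertexSet := meet_mem_vertexSet t hx0l hx1l hx01
        have hM : t.meetVertex x1 y ∈ t.vertexSet := meet_mem_vertexSet t hx1l hyl hx1y
        by_cases hAM : t.meetVertex x0 x1 = t.meetVertex x1 y
        · rcases hEu hE01 hEuw (hAM.trans hm) with ⟨h1, h2⟩ | ⟨h1, h2⟩
          · -- u = x0, w = x1 : recurse on the suffix x0 :: x1 :: l2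
            rw [h1, h2] at heq
            have hchS : (x0 :: x1 :: l2).Chain' E := hch'.suffix ⟨l1, heq.symm⟩
            have hlsS : (x0 :: x1 :: l2).getLast? = some y := by
              rw [heq, List.getLast?_append_of_ne_nil _ (List.cons_ne_nil _ _)] at hls'
              exact hls'
            have hlenS : (x0 :: x1 :: l2).length ≤ n := by
              have h2 := hlen'
              rw [heq] at h2
              simp only [List.length_append, List.length_cons] at h2 ⊢
              omega
            obtain ⟨m1, u', w', m2, heq2, hm2⟩ := IH _ hlenS hchS x0 y rfl hlsS hne
            refine ⟨x0 :: (l1 ++ m1), u', w', m2, ?_, hm2⟩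
            rw [List.cons_append, List.append_assoc, ← heq2, ← heq]
          · -- u = x1, w = x0 : recurse on the suffix x0 :: l2
            rw [h1, h2] at heq
            have hchS : (x0 :: l2).Chain' E := hch'.suffix ⟨l1 ++ [x1], by rw [heq]; simp⟩
            have hlsS : (x0 :: l2).getLast? = some y := by
              rw [heq, List.getLast?_append_of_ne_nil _ (List.cons_ne_nil _ _),
                List.getLast?_cons_cons] at hls'
              exact hls'
            have hlenS : (x0 :: l2).length ≤ n := by
              have h2 := hlen'
              rw [heq] at h2
              simp only [List.length_append, List.length_cons] at h2 ⊢
              omega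
            obtain ⟨m1, u', w', m2, heq2, hm2⟩ := IH _ hlenS hchS x0 y rfl hlsS hne
            refine ⟨x0 :: (l1 ++ x1 :: m1), u', w', m2, ?_, hm2⟩
            simp only [List.cons_append, List.append_assoc]
            rw [← heq2, ← heq]
        · rcases vertex_chain hn hA hM (mem_meet_right t x0 hx1l) (mem_meet_left t y hx1l)
            with hsub | hsub
          · have hss : t.meetVertex x0 x1 ⊂ t.meetVertex x1 y :=
              ssubset_of_subset_of_ne hsub hAM
            have hst := meet_step hn hx0l hx1l hyl hx01 hx1y hne hss
            refine ⟨x0 :: l1, u, w, l2, ?_, hst.trans hm⟩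
            rw [List.cons_append, ← heq]
          · have hss : t.meetVertex y x1 ⊂ t.meetVertex x1 x0 := by
              rw [meet_comm t y x1, meet_comm t x1 x0]
              exact ssubset_of_subset_of_ne hsub (fun h => hAM h.symm)
            have h2 := meet_step hn hyl hx1l hx0l (fun h => hx1y h.symm)
              (fun h => hx01 h.symm) (fun h => hne h.symm) hss
            refine ⟨[], x0, x1, rest, rfl, ?_⟩
            rw [meet_comm t x0 y, h2, meet_comm t x1 x0]

end MeetChain

section EqvPart

variable {α : Type} [DecidableEq α]

/-- The relation generated by the atom pairs. -/
def Erel {k : ℕ} (p q : Fin k → α) : α → α → Prop :=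
  fun x y => ∃ r, (x = p r ∧ y = q r) ∨ (x = q r ∧ y = p r)

open Classical in
/-- The equivalence class of `x` in `I` under `EqvGen E`. -/
noncomputable def cls (I : Finset α) (E : α → α → Prop) (x : α) : Finset α :=
  I.filter fun y => Relation.EqvGen E x y

lemma mem_cls {I : Finset α} {E : α → α → Prop} {x y : α} :
    y ∈ cls I E x ↔ y ∈ I ∧ Relation.EqvGen E x y := by
  simp [cls, Finset.mem_filter]

lemma cls_eq {I : Finset α} {E : α → α → Prop} {x y : α}
    (h : Relation.EqvGen E x y) : cls I E x = cls I E y := by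
  ext z
  simp only [mem_cls]
  exact and_congr_right fun _ =>
    ⟨fun hz => Relation.EqvGen.trans _ _ _ (Relation.EqvGen.symm _ _ h) hz,
     fun hz => Relation.EqvGen.trans _ _ _ h hz⟩

/-- The partition of `I` into `EqvGen E`-classes. -/
noncomputable def eqvPartition (I : Finset α) (E : α → α → Prop) : Finpartition I where
  parts := I.image fun x => cls I E x
  supIndep := by
    rw [Finset.supIndep_iff_pairwiseDisjoint]
    rintro B hB C hC hBC
    simp only [Finset.coe_image, Set.mem_image, Finset.mem_coe] at hB hC
    obtain ⟨x, hx, rfl⟩ := hB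
    obtain ⟨x', hx', rfl⟩ := hC
    rw [Function.onFun, Finset.disjoint_left]
    intro z hz hz'
    rw [id_eq, mem_cls] at hz hz'
    exact hBC ((cls_eq hz.2).trans (cls_eq hz'.2).symm)
  sup_parts := by
    apply Finset.Subset.antisymm
    · intro z hz
      rw [Finset.mem_sup] at hz
      obtain ⟨B, hB, hzB⟩ := hz
      obtain ⟨x, hx, rfl⟩ := Finset.mem_image.mp hB
      exact (mem_cls.mp hzB).1
    · intro x hx
      rw [Finset.mem_sup]
      exact ⟨cls I E x, Finset.mem_image_of_mem _ hx,
        mem_cls.mpr ⟨hx, Relation.EqvGen.refl x⟩⟩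
  bot_notMem := by
    intro h
    obtain ⟨x, hx, hc⟩ := Finset.mem_image.mp h
    have hm : x ∈ cls I E x := mem_cls.mpr ⟨hx, Relation.EqvGen.refl x⟩
    rw [hc] at hm
    simp at hm

lemma eqvPartition_parts {I : Finset α} {E : α → α → Prop} {B : Finset α} :
    B ∈ (eqvPartition I E).parts ↔ ∃ x ∈ I, cls I E x = B := by
  simp [eqvPartition]

end EqvPart

/-- if `a_1, …, a_k` are atoms of `Ad(T)` (the atom `a_r` having
doubleton block `{i_r, j_r}`) whose associated vertices `v_r = v_{(i_r, j_r)}` are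
pairwise distinct, then `V(a_1 ∨ ⋯ ∨ a_k) = {v_1, …, v_k}`. -/
theorem stmt10 {α : Type} [DecidableEq α] (I : Finset α) (T : BTree α)
    (hT : T.IsTreeOn I) (k : ℕ)
    (a : Fin k → AdPartition T I) (p q : Fin k → α)
    (ha : ∀ r, AdPartition.IsAtomPart T I (a r) (p r) (q r))
    (hdist : Function.Injective fun r => T.meetVertex (p r) (q r)) :
    ∀ s : AdPartition T I, IsLUB (Set.range a) s →
      AdPartition.verts T s.1 =
        Finset.image (fun r => T.meetVertex (p r) (q r)) Finset.univ := by
  classical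
  intro s hs
  obtain ⟨hnodup, hleaves⟩ := hT
  have hpq : ∀ r, p r ≠ q r := fun r => (ha r).1
  have hpart : ∀ r, ({p r, q r} : Finset α) ∈ (a r).1.parts := fun r => by
    rw [(ha r).2]; exact Finset.mem_insert_self _ _
  have hpI : ∀ r, p r ∈ I := fun r => (a r).1.le (hpart r) (by simp)
  have hqI : ∀ r, q r ∈ I := fun r => (a r).1.le (hpart r) (by simp)
  have hEsym : ∀ {x y}, Erel p q x y → Erel p q y x := by
    rintro x y ⟨r, ⟨h1, h2⟩ | ⟨h1, h2⟩⟩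
    · exact ⟨r, Or.inr ⟨h2, h1⟩⟩
    · exact ⟨r, Or.inl ⟨h2, h1⟩⟩
  have hElv : ∀ {x y}, Erel p q x y → x ∈ T.leaves ∧ y ∈ T.leaves := by
    rintro x y ⟨r, ⟨rfl, rfl⟩ | ⟨rfl, rfl⟩⟩
    · exact ⟨hleaves ▸ hpI r, hleaves ▸ hqI r⟩
    · exact ⟨hleaves ▸ hqI r, hleaves ▸ hpI r⟩
  have hEne : ∀ {x y}, Erel p q x y → x ≠ y := by
    rintro x y ⟨r, ⟨rfl, rfl⟩ | ⟨rfl, rfl⟩⟩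
    · exact hpq r
    · exact (hpq r).symm
  have hEu : ∀ {x y u w}, Erel p q x y → Erel p q u w →
      T.meetVertex x y = T.meetVertex u w → (u = x ∧ w = y) ∨ (u = y ∧ w = x) := by
    rintro x y u w ⟨r, hr⟩ ⟨r', hr'⟩ hm
    have e1 : T.meetVertex x y = T.meetVertex (p r) (q r) := by
      rcases hr with ⟨h1, h2⟩ | ⟨h1, h2⟩ <;> rw [h1, h2]
      exact BTree.meet_comm T _ _
    have e2 : T.meetVertex u w = T.meetVertex (p r') (q r') := by
      rcases hr' with ⟨h1, h2⟩ | ⟨h1, h2⟩ <;> rw [h1, h2]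
      exact BTree.meet_comm T _ _
    have hrr : r = r' := hdist (e1.symm.trans (hm.trans e2))
    subst hrr
    rcases hr with ⟨h1, h2⟩ | ⟨h1, h2⟩ <;> rcases hr' with ⟨h3, h4⟩ | ⟨h3, h4⟩
    · exact Or.inl ⟨h3.trans h1.symm, h4.trans h2.symm⟩
    · exact Or.inr ⟨h3.trans h2.symm, h4.trans h1.symm⟩
    · exact Or.inr ⟨h3.trans h2.symm, h4.trans h1.symm⟩
    · exact Or.inl ⟨h3.trans h1.symm, h4.trans h2.symm⟩
  have key : ∀ x y, Relation.EqvGen (Erel p q) x y → x ≠ y →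
      ∃ r, T.meetVertex x y = T.meetVertex (p r) (q r) ∧
        Relation.EqvGen (Erel p q) x (p r) := by
    intro x y hxy hne
    obtain ⟨l, hch, hhd, hls⟩ := eqvGen_chain hEsym hxy
    obtain ⟨l1, u, w, l2, heq, hm⟩ :=
      chain_meet hnodup (Erel p q) hElv hEne hEu l.length l le_rfl hch x y hhd hls hne
    have hEuw : Erel p q u w := chain'_mid l1 (heq ▸ hch)
    obtain ⟨lt, rfl⟩ : ∃ lt, l = x :: lt := by
      cases l with
      | nil => simp at hhd
      | cons a' lt =>
        simp only [List.head?_cons, Option.some.injEq] at hhd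
        exact ⟨lt, by rw [hhd]⟩
    have hu : Relation.EqvGen (Erel p q) x u := by
      apply chain_eqvGen x lt hch
      rw [heq]; simp
    obtain ⟨r, hruw⟩ := hEuw
    rcases hruw with ⟨hup, hwq⟩ | ⟨huq, hwp⟩
    · exact ⟨r, by rw [hm, hup, hwq], hup ▸ hu⟩
    · refine ⟨r, by rw [hm, huq, hwp]; exact BTree.meet_comm T _ _, ?_⟩
      have h1 : Relation.EqvGen (Erel p q) x (q r) := huq ▸ hu
      exact Relation.EqvGen.trans _ _ _ h1
        (Relation.EqvGen.rel _ _ ⟨r, Or.inr ⟨rfl, rfl⟩⟩)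
  have hSmem : ∀ (J : Finset α) (m : Finset α), m ∈ T.S J ↔
      ∃ i j, i ∈ J ∧ j ∈ J ∧ i ≠ j ∧ T.meetVertex i j = m := by
    intro J m
    unfold BTree.S
    rw [Finset.mem_image]
    constructor
    · rintro ⟨pr, hpr, rfl⟩
      rw [Finset.mem_filter, Finset.mem_product] at hpr
      exact ⟨pr.1, pr.2, hpr.1.1, hpr.1.2, hpr.2, rfl⟩
    · rintro ⟨i, j, hi, hj, hne, rfl⟩
      exact ⟨(i, j), Finset.mem_filter.mpr ⟨Finset.mem_product.mpr ⟨hi, hj⟩, hne⟩, rfl⟩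
  have hadm : T.Admissible (eqvPartition I (Erel p q)) := by
    intro B hB C hC hBC
    rw [Finset.eq_empty_iff_forall_notMem]
    intro m hm
    rw [Finset.mem_inter, hSmem, hSmem] at hm
    obtain ⟨⟨i, j, hiB, hjB, hij, hijm⟩, ⟨i', j', hiC, hjC, hij', hijm'⟩⟩ := hm
    obtain ⟨x, hx, rfl⟩ := eqvPartition_parts.mp hB
    obtain ⟨x', hx', rfl⟩ := eqvPartition_parts.mp hC
    rw [mem_cls] at hiB hjB hiC hjC
    have hijE : Relation.EqvGen (Erel p q) i j :=
      Relation.EqvGen.trans _ _ _ (Relation.EqvGen.symm _ _ hiB.2) hjB.2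
    have hijE' : Relation.EqvGen (Erel p q) i' j' :=
      Relation.EqvGen.trans _ _ _ (Relation.EqvGen.symm _ _ hiC.2) hjC.2
    obtain ⟨r, hr, hconn⟩ := key i j hijE hij
    obtain ⟨r', hr', hconn'⟩ := key i' j' hijE' hij'
    have hrr : r = r' := hdist (by
      show T.meetVertex (p r) (q r) = T.meetVertex (p r') (q r')
      rw [← hr, ← hr', hijm, hijm'])
    subst hrr
    apply hBC
    have h1 : cls I (Erel p q) x = cls I (Erel p q) (p r) :=
      cls_eq (Relation.EqvGen.trans _ _ _ hiB.2 hconn)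
    have h2 : cls I (Erel p q) x' = cls I (Erel p q) (p r) :=
      cls_eq (Relation.EqvGen.trans _ _ _ hiC.2 hconn')
    rw [h1, h2]
  have hub : ∀ z ∈ Set.range a, z ≤ (⟨eqvPartition I (Erel p q), hadm⟩ : AdPartition T I) := by
    rintro _ ⟨r, rfl⟩
    show (a r).1 ≤ eqvPartition I (Erel p q)
    intro B hB
    rw [(ha r).2, Finset.mem_insert] at hB
    rcases hB with rfl | hB
    · refine ⟨cls I (Erel p q) (p r), eqvPartition_parts.mpr ⟨p r, hpI r, rfl⟩, ?_⟩
      intro z hz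
      rw [Finset.mem_insert, Finset.mem_singleton] at hz
      rcases hz with rfl | rfl
      · exact mem_cls.mpr ⟨hpI r, Relation.EqvGen.refl _⟩
      · exact mem_cls.mpr ⟨hqI r, Relation.EqvGen.rel _ _ ⟨r, Or.inl ⟨rfl, rfl⟩⟩⟩
    · obtain ⟨x, hx, rfl⟩ := Finset.mem_image.mp hB
      rw [Finset.mem_sdiff] at hx
      refine ⟨cls I (Erel p q) x, eqvPartition_parts.mpr ⟨x, hx.1, rfl⟩, ?_⟩
      intro z hz
      rw [Finset.mem_singleton] at hz
      subst hz
      exact mem_cls.mpr ⟨hx.1, Relation.EqvGen.refl _⟩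
  have hSmono : ∀ {B C : Finset α}, B ⊆ C → T.S B ⊆ T.S C := by
    intro B C hBC m hm
    rw [hSmem] at hm ⊢
    obtain ⟨i, j, hi, hj, hne, rfl⟩ := hm
    exact ⟨i, j, hBC hi, hBC hj, hne, rfl⟩
  have hmono : ∀ (π σ : Finpartition I), π ≤ σ →
      AdPartition.verts T π ⊆ AdPartition.verts T σ := by
    intro π σ h m hm
    rw [AdPartition.verts, Finset.mem_sup] at hm ⊢
    obtain ⟨B, hB, hmB⟩ := hm
    obtain ⟨C, hC, hBC⟩ := h hB
    exact ⟨C, hC, hSmono hBC hmB⟩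
  apply Finset.Subset.antisymm
  · refine (hmono s.1 (eqvPartition I (Erel p q)) (hs.2 hub)).trans ?_
    intro m hm
    rw [AdPartition.verts, Finset.mem_sup] at hm
    obtain ⟨B, hB, hmB⟩ := hm
    obtain ⟨x, hx, rfl⟩ := eqvPartition_parts.mp hB
    rw [hSmem] at hmB
    obtain ⟨i, j, hi, hj, hne, rfl⟩ := hmB
    rw [mem_cls] at hi hj
    obtain ⟨r, hr, -⟩ := key i j
      (Relation.EqvGen.trans _ _ _ (Relation.EqvGen.symm _ _ hi.2) hj.2) hne
    rw [Finset.mem_image]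
    exact ⟨r, Finset.mem_univ r, hr.symm⟩
  · intro m hm
    rw [Finset.mem_image] at hm
    obtain ⟨r, -, rfl⟩ := hm
    refine hmono (a r).1 s.1 (hs.1 ⟨r, rfl⟩) ?_
    rw [AdPartition.verts, Finset.mem_sup]
    refine ⟨{p r, q r}, hpart r, ?_⟩
    rw [hSmem]
    exact ⟨p r, q r, by simp, by simp, hpq r, rfl⟩
end
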